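/- Let γ : ℝ → ℝ³ be a C^∞ curve with ‖γ'(t)‖ = 1 and γ''(t) ≠ 0 for all t, and let P₀(t) := sin(∫_a^t τ(s) ds)·n(t) + cos(∫_a^t τ(s) ds)·b(t) be the parallel unit normal field built from the Frenet frame (with n = γ''/‖γ''‖, b = γ' × n, τ = det(γ',γ'',γ''')/‖γ''‖²). If P : ℝ → ℝ³ is any C¹ vector field with ‖P(t)‖ = 1, P(t)·γ'(t) = 0 and P'(t) × γ'(t) = 0 for all t, then there exists a constant δ ∈ ℝ such that P(t) = cos δ · P₀(t) + sin δ · (γ'(t) × P₀(t)) for all t. -/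

import Mathlib

open Real

noncomputable abbrev E3 := EuclideanSpace ℝ (Fin 3)

/-- The cross product of vectors in Euclidean 3-space. -/
noncomputable def cross3 (u v : E3) : E3 :=
  (WithLp.equiv 2 (Fin 3 → ℝ)).symm
    ![u 1 * v 2 - u 2 * v 1, u 2 * v 0 - u 0 * v 2, u 0 * v 1 - u 1 * v 0]

/-- The dot product of vectors in Euclidean 3-space. -/
noncomputable def dot3 (u v : E3) : ℝ := u 0 * v 0 + u 1 * v 1 + u 2 * v 2

/-- The determinant of the 3×3 matrix with columns `u`, `v`, `w`. -/
noncomputable def det3 (u v w : E3) : ℝ := dot3 u (cross3 v w)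

/-- The curvature of a unit-speed curve. -/
noncomputable def curv (γ : ℝ → E3) (t : ℝ) : ℝ := ‖deriv (deriv γ) t‖

/-- The unit principal normal of a unit-speed curve. -/
noncomputable def pnormal (γ : ℝ → E3) (t : ℝ) : E3 :=
  (curv γ t)⁻¹ • deriv (deriv γ) t

/-- The unit binormal of a unit-speed curve. -/
noncomputable def binormal (γ : ℝ → E3) (t : ℝ) : E3 :=
  cross3 (deriv γ t) (pnormal γ t)

/-- The torsion of a unit-speed curve. -/
noncomputable def tors (γ : ℝ → E3) (t : ℝ) : ℝ :=
  det3 (deriv γ t) (deriv (deriv γ) t) (deriv (deriv (deriv γ)) t) / (curv γ t) ^ 2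

/-- The parallel unit normal field built from the Frenet frame. -/
noncomputable def parNormal (γ : ℝ → E3) (a t : ℝ) : E3 :=
  Real.sin (∫ s in a..t, tors γ s) • pnormal γ t +
    Real.cos (∫ s in a..t, tors γ s) • binormal γ t

namespace ParNormalAux

lemma fin2eq (h : 2 < 3) : (⟨2, h⟩ : Fin 3) = 2 := rfl

lemma cross3_apply (u v : E3) (i : Fin 3) : cross3 u v i =
    ![u 1 * v 2 - u 2 * v 1, u 2 * v 0 - u 0 * v 2, u 0 * v 1 - u 1 * v 0] i := by
  simp [cross3]

lemma smul_apply3 (r : ℝ) (u : E3) (i : Fin 3) : (r • u) i = r * u i := rfl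
lemma add_apply3 (u v : E3) (i : Fin 3) : (u + v) i = u i + v i := rfl
lemma zero_apply3 (i : Fin 3) : (0 : E3) i = 0 := rfl

lemma ext3 {u v : E3} (h : ∀ i, u i = v i) : u = v := PiLp.ext h

lemma dot3_comm (u v : E3) : dot3 u v = dot3 v u := by simp only [dot3]; ring

lemma dot3_self (u : E3) : dot3 u u = ‖u‖ ^ 2 := by
  rw [EuclideanSpace.norm_eq, Real.sq_sqrt (by positivity)]
  simp only [dot3, Fin.sum_univ_three, Real.norm_eq_abs, sq_abs]
  ring

lemma dot3_smul_left (r : ℝ) (u v : E3) : dot3 (r • u) v = r * dot3 u v := by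
  simp only [dot3, smul_apply3]; ring

lemma dot3_smul_right (r : ℝ) (u v : E3) : dot3 u (r • v) = r * dot3 u v := by
  simp only [dot3, smul_apply3]; ring

lemma dot3_add_left (u v w : E3) : dot3 (u + v) w = dot3 u w + dot3 v w := by
  simp only [dot3, add_apply3]; ring

lemma dot3_add_right (u v w : E3) : dot3 u (v + w) = dot3 u v + dot3 u w := by
  simp only [dot3, add_apply3]; ring

lemma cross3_smul_right (r : ℝ) (u v : E3) : cross3 u (r • v) = r • cross3 u v := by
  refine ext3 fun i => ?_
  fin_cases i <;> simp [cross3_apply, smul_apply3, fin2eq] <;> ring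

lemma cross3_smul_left (r : ℝ) (u v : E3) : cross3 (r • u) v = r • cross3 u v := by
  refine ext3 fun i => ?_
  fin_cases i <;> simp [cross3_apply, smul_apply3, fin2eq] <;> ring

lemma cross3_add_right (u v w : E3) : cross3 u (v + w) = cross3 u v + cross3 u w := by
  refine ext3 fun i => ?_
  fin_cases i <;> simp [cross3_apply, add_apply3, fin2eq] <;> ring

lemma cross3_self (u : E3) : cross3 u u = 0 := by
  refine ext3 fun i => ?_
  fin_cases i <;> simp [cross3_apply, zero_apply3, fin2eq] <;> ring

lemma cross3_zero_right (u : E3) : cross3 u 0 = 0 := by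
  refine ext3 fun i => ?_
  fin_cases i <;> simp [cross3_apply, zero_apply3, fin2eq]

lemma cross3_anticomm (u v : E3) : cross3 u v = -cross3 v u := by
  refine ext3 fun i => ?_
  fin_cases i <;> simp [cross3_apply, fin2eq] <;> ring

lemma neg_apply3 (u : E3) (i : Fin 3) : (-u) i = -(u i) := rfl

lemma dot3_cross_self_right (u v : E3) : dot3 v (cross3 u v) = 0 := by
  simp only [dot3, cross3_apply]
  simp only [Matrix.cons_val_zero, Matrix.cons_val_one, Matrix.head_cons,
    Matrix.cons_val_two, Matrix.tail_cons]
  ring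

lemma dot3_cross_self_left (u v : E3) : dot3 u (cross3 u v) = 0 := by
  simp only [dot3, cross3_apply]
  simp only [Matrix.cons_val_zero, Matrix.cons_val_one, Matrix.head_cons,
    Matrix.cons_val_two, Matrix.tail_cons]
  ring

lemma triple_cyc (u v w : E3) : dot3 u (cross3 v w) = dot3 w (cross3 u v) := by
  simp only [dot3, cross3_apply]
  simp only [Matrix.cons_val_zero, Matrix.cons_val_one, Matrix.head_cons,
    Matrix.cons_val_two, Matrix.tail_cons]
  ring

lemma cross3_cross3 (u v w : E3) :
    cross3 u (cross3 v w) = dot3 u w • v - dot3 u v • w := by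
  refine ext3 fun i => ?_
  fin_cases i <;>
    simp [cross3_apply, dot3, smul_apply3, fin2eq, Matrix.cons_val_zero, Matrix.cons_val_one] <;>
    ring

lemma lagrange (u v : E3) :
    dot3 (cross3 u v) (cross3 u v) = dot3 u u * dot3 v v - (dot3 u v) ^ 2 := by
  simp only [dot3, cross3_apply]
  simp only [Matrix.cons_val_zero, Matrix.cons_val_one, Matrix.head_cons,
    Matrix.cons_val_two, Matrix.tail_cons]
  ring

/-- Orthonormal expansion in the frame `(T, N, T × N)`. -/
lemma expand3 (T N v : E3) (hTT : dot3 T T = 1) (hNN : dot3 N N = 1) (hTN : dot3 T N = 0) :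
    v = dot3 v T • T + dot3 v N • N + dot3 v (cross3 T N) • cross3 T N := by
  simp only [dot3] at hTT hNN hTN
  refine ext3 fun i => ?_
  simp only [add_apply3, smul_apply3, cross3_apply, dot3]
  fin_cases i <;>
    simp only [Matrix.cons_val_zero, Matrix.cons_val_one, Matrix.head_cons,
      Matrix.cons_val_two, Matrix.tail_cons, Fin.mk_zero, Fin.mk_one, fin2eq, Fin.isValue]
  · linear_combination ((v 0 * N 0 + v 1 * N 1 + v 2 * N 2) * N 0 - v 0) * hTT +
      ((v 0 * T 0 + v 1 * T 1 + v 2 * T 2) * T 0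
        - (T 0 * T 0 + T 1 * T 1 + T 2 * T 2) * v 0) * hNN +
      (-(v 0 * N 0 + v 1 * N 1 + v 2 * N 2) * T 0 - (v 0 * T 0 + v 1 * T 1 + v 2 * T 2) * N 0
        + (T 0 * N 0 + T 1 * N 1 + T 2 * N 2) * v 0) * hTN
  · linear_combination ((v 0 * N 0 + v 1 * N 1 + v 2 * N 2) * N 1 - v 1) * hTT +
      ((v 0 * T 0 + v 1 * T 1 + v 2 * T 2) * T 1
        - (T 0 * T 0 + T 1 * T 1 + T 2 * T 2) * v 1) * hNN +
      (-(v 0 * N 0 + v 1 * N 1 + v 2 * N 2) * T 1 - (v 0 * T 0 + v 1 * T 1 + v 2 * T 2) * N 1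
        + (T 0 * N 0 + T 1 * N 1 + T 2 * N 2) * v 1) * hTN
  · linear_combination ((v 0 * N 0 + v 1 * N 1 + v 2 * N 2) * N 2 - v 2) * hTT +
      ((v 0 * T 0 + v 1 * T 1 + v 2 * T 2) * T 2
        - (T 0 * T 0 + T 1 * T 1 + T 2 * T 2) * v 2) * hNN +
      (-(v 0 * N 0 + v 1 * N 1 + v 2 * N 2) * T 2 - (v 0 * T 0 + v 1 * T 1 + v 2 * T 2) * N 2
        + (T 0 * N 0 + T 1 * N 1 + T 2 * N 2) * v 2) * hTN

/-- A vector whose cross product with a unit vector vanishes is a multiple of it. -/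
lemma eq_smul_of_cross3_eq_zero {v T : E3} (h : cross3 v T = 0) (hT : dot3 T T = 1) :
    v = dot3 v T • T := by
  have h1 := cross3_cross3 T v T
  rw [h, cross3_zero_right] at h1
  have h2 : dot3 T T • v = dot3 T v • T := sub_eq_zero.mp h1.symm
  rw [hT, one_smul] at h2
  conv_lhs => rw [h2]
  rw [dot3_comm]

section Calc

lemma hasDerivAt_coord {u : ℝ → E3} {u' : E3} {t : ℝ} (hu : HasDerivAt u u' t) (i : Fin 3) :
    HasDerivAt (fun s => u s i) (u' i) t :=
  (EuclideanSpace.proj (𝕜 := ℝ) i).hasFDerivAt.comp_hasDerivAt t hu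

lemma hasDerivAt_dot3 {u v : ℝ → E3} {u' v' : E3} {t : ℝ}
    (hu : HasDerivAt u u' t) (hv : HasDerivAt v v' t) :
    HasDerivAt (fun s => dot3 (u s) (v s)) (dot3 u' (v t) + dot3 (u t) v') t := by
  have h := (((hasDerivAt_coord hu 0).mul (hasDerivAt_coord hv 0)).add
    ((hasDerivAt_coord hu 1).mul (hasDerivAt_coord hv 1))).add
    ((hasDerivAt_coord hu 2).mul (hasDerivAt_coord hv 2))
  simp only [dot3]
  exact h.congr_deriv (by ring)

lemma hasDerivAt_cross3 {u v : ℝ → E3} {u' v' : E3} {t : ℝ}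
    (hu : HasDerivAt u u' t) (hv : HasDerivAt v v' t) :
    HasDerivAt (fun s => cross3 (u s) (v s)) (cross3 u' (v t) + cross3 (u t) v') t := by
  have key : HasDerivAt (fun s => (WithLp.equiv 2 (Fin 3 → ℝ))
        (cross3 (u s) (v s)))
      ((WithLp.equiv 2 (Fin 3 → ℝ)) (cross3 u' (v t) + cross3 (u t) v')) t := by
    rw [hasDerivAt_pi]
    intro i
    have e1 : ∀ (w : E3) (j : Fin 3), (WithLp.equiv 2 (Fin 3 → ℝ)) w j = w j := fun _ _ => rfl
    simp only [e1, add_apply3]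
    fin_cases i <;>
      simp only [cross3_apply, Matrix.cons_val_zero, Matrix.cons_val_one, Matrix.head_cons,
        Matrix.cons_val_two, Matrix.tail_cons, Fin.mk_zero, Fin.mk_one, fin2eq, Fin.isValue]
    · have h := ((hasDerivAt_coord hu 1).mul (hasDerivAt_coord hv 2)).sub
        ((hasDerivAt_coord hu 2).mul (hasDerivAt_coord hv 1))
      convert h using 1
      · rfl
      · ring
    · have h := ((hasDerivAt_coord hu 2).mul (hasDerivAt_coord hv 0)).sub
        ((hasDerivAt_coord hu 0).mul (hasDerivAt_coord hv 2))
      convert h using 1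
      · rfl
      · ring
    · have h := ((hasDerivAt_coord hu 0).mul (hasDerivAt_coord hv 1)).sub
        ((hasDerivAt_coord hu 1).mul (hasDerivAt_coord hv 0))
      convert h using 1
      · rfl
      · ring
  have := ((PiLp.continuousLinearEquiv 2 ℝ (fun _ : Fin 3 => ℝ)).symm :
      (Fin 3 → ℝ) →L[ℝ] E3).hasFDerivAt.comp_hasDerivAt t key
  exact this

end Calc

end ParNormalAux


namespace ParNormalAux

lemma frame (γ : ℝ → E3) (a : ℝ) (hγ : ContDiff ℝ (⊤ : ℕ∞) γ)
    (hunit : ∀ t, ‖deriv γ t‖ = 1)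
    (hinf : ∀ t, deriv (deriv γ) t ≠ 0) :
    (∀ t, dot3 (deriv γ t) (deriv γ t) = 1) ∧
    (∀ t, dot3 (parNormal γ a t) (parNormal γ a t) = 1) ∧
    (∀ t, dot3 (deriv γ t) (parNormal γ a t) = 0) ∧
    (∀ t, ∃ μ : ℝ, HasDerivAt (parNormal γ a) (μ • deriv γ t) t) ∧
    (∀ t, ∃ ν : ℝ, HasDerivAt (fun s => cross3 (deriv γ s) (parNormal γ a s))
      (ν • deriv γ t) t) := by
  have hγ1 : ContDiff ℝ (↑(⊤:ℕ∞)) (deriv γ) :=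
    (contDiff_infty_iff_deriv.mp (hγ.of_le (by simp))).2
  have hγ2 : ContDiff ℝ (↑(⊤:ℕ∞)) (deriv (deriv γ)) :=
    (contDiff_infty_iff_deriv.mp hγ1).2
  have hγ3 : ContDiff ℝ (↑(⊤:ℕ∞)) (deriv (deriv (deriv γ))) :=
    (contDiff_infty_iff_deriv.mp hγ2).2
  have hTd : ∀ t, HasDerivAt (deriv γ) (deriv (deriv γ) t) t := fun t =>
    ((hγ1.differentiable (by simp)) t).hasDerivAt
  have hAd : ∀ t, HasDerivAt (deriv (deriv γ)) (deriv (deriv (deriv γ)) t) t := fun t =>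
    ((hγ2.differentiable (by simp)) t).hasDerivAt
  have hJd : ∀ t, HasDerivAt (deriv (deriv (deriv γ)))
      (deriv (deriv (deriv (deriv γ))) t) t := fun t =>
    ((hγ3.differentiable (by simp)) t).hasDerivAt
  have hκ0 : ∀ t, curv γ t ≠ 0 := fun t => norm_ne_zero_iff.mpr (hinf t)
  have hκd : ∀ t, DifferentiableAt ℝ (curv γ) t := fun t =>
    DifferentiableAt.norm ℝ (hAd t).differentiableAt (hinf t)
  have hκ : ∀ t, HasDerivAt (curv γ) (deriv (curv γ) t) t := fun t => (hκd t).hasDerivAt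
  -- derivative of the principal normal
  have hNd : ∀ t, HasDerivAt (pnormal γ)
      ((curv γ t)⁻¹ • deriv (deriv (deriv γ)) t
        + (-(deriv (curv γ) t) / curv γ t ^ 2) • deriv (deriv γ) t) t := fun t =>
    ((hκ t).inv (hκ0 t)).smul (hAd t)
  -- derivative of the binormal
  have hBd : ∀ t, HasDerivAt (binormal γ)
      (cross3 (deriv (deriv γ) t) (pnormal γ t)
        + cross3 (deriv γ t) ((curv γ t)⁻¹ • deriv (deriv (deriv γ)) t
          + (-(deriv (curv γ) t) / curv γ t ^ 2) • deriv (deriv γ) t)) t := fun t =>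
    hasDerivAt_cross3 (hTd t) (hNd t)
  -- scalar frame facts
  have f1 : ∀ t, dot3 (deriv γ t) (deriv γ t) = 1 := fun t => by
    rw [dot3_self, hunit t]; norm_num
  have f2 : ∀ t, dot3 (deriv (deriv γ) t) (deriv γ t) = 0 := fun t => by
    have h := hasDerivAt_dot3 (hTd t) (hTd t)
    have hc : HasDerivAt (fun s => dot3 (deriv γ s) (deriv γ s)) 0 t := by
      have he : (fun s => dot3 (deriv γ s) (deriv γ s)) = fun _ => (1:ℝ) :=
        funext fun s => f1 s
      rw [he]; exact hasDerivAt_const t 1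
    have hu := h.unique hc
    have hcomm := dot3_comm (deriv (deriv γ) t) (deriv γ t)
    linarith [hu, hcomm]
  have f3 : ∀ t, dot3 (deriv (deriv γ) t) (deriv (deriv γ) t) = curv γ t ^ 2 := fun t => by
    rw [dot3_self]; rfl
  have f4 : ∀ t, dot3 (pnormal γ t) (pnormal γ t) = 1 := fun t => by
    show dot3 ((curv γ t)⁻¹ • _) ((curv γ t)⁻¹ • _) = 1
    rw [dot3_smul_left, dot3_smul_right, f3, pow_two]
    field_simp [hκ0 t]
  have f5 : ∀ t, dot3 (deriv γ t) (pnormal γ t) = 0 := fun t => by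
    show dot3 _ ((curv γ t)⁻¹ • _) = 0
    rw [dot3_smul_right, dot3_comm, f2, mul_zero]
  have f9 : ∀ t, dot3 (binormal γ t) (pnormal γ t) = 0 := fun t => by
    show dot3 (cross3 _ _) _ = 0
    rw [dot3_comm, dot3_cross_self_right]
  have f10 : ∀ t, dot3 (binormal γ t) (deriv γ t) = 0 := fun t => by
    show dot3 (cross3 _ _) _ = 0
    rw [dot3_comm, dot3_cross_self_left]
  have f7 : ∀ t, dot3 (binormal γ t) (binormal γ t) = 1 := fun t => by
    show dot3 (cross3 _ _) (cross3 _ _) = 1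
    rw [lagrange, f1, f4, f5]; ring
  -- N' ⬝ N = 0
  have f6 : ∀ t, dot3 ((curv γ t)⁻¹ • deriv (deriv (deriv γ)) t
      + (-(deriv (curv γ) t) / curv γ t ^ 2) • deriv (deriv γ) t) (pnormal γ t) = 0 := fun t => by
    have h := hasDerivAt_dot3 (hNd t) (hNd t)
    have hc : HasDerivAt (fun s => dot3 (pnormal γ s) (pnormal γ s)) 0 t := by
      have he : (fun s => dot3 (pnormal γ s) (pnormal γ s)) = fun _ => (1:ℝ) :=
        funext fun s => f4 s
      rw [he]; exact hasDerivAt_const t 1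
    have hu := h.unique hc
    have hcomm := dot3_comm ((curv γ t)⁻¹ • deriv (deriv (deriv γ)) t
      + (-(deriv (curv γ) t) / curv γ t ^ 2) • deriv (deriv γ) t) (pnormal γ t)
    linarith [hu, hcomm]
  -- B' ⬝ B = 0
  have f8 : ∀ t, dot3 (cross3 (deriv (deriv γ) t) (pnormal γ t)
      + cross3 (deriv γ t) ((curv γ t)⁻¹ • deriv (deriv (deriv γ)) t
        + (-(deriv (curv γ) t) / curv γ t ^ 2) • deriv (deriv γ) t)) (binormal γ t) = 0 :=
    fun t => by
    have h := hasDerivAt_dot3 (hBd t) (hBd t)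
    have hc : HasDerivAt (fun s => dot3 (binormal γ s) (binormal γ s)) 0 t := by
      have he : (fun s => dot3 (binormal γ s) (binormal γ s)) = fun _ => (1:ℝ) :=
        funext fun s => f7 s
      rw [he]; exact hasDerivAt_const t 1
    have hu := h.unique hc
    have hcomm := dot3_comm (cross3 (deriv (deriv γ) t) (pnormal γ t)
      + cross3 (deriv γ t) ((curv γ t)⁻¹ • deriv (deriv (deriv γ)) t
        + (-(deriv (curv γ) t) / curv γ t ^ 2) • deriv (deriv γ) t)) (binormal γ t)
    linarith [hu, hcomm]
  -- N' ⬝ B = τ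
  have f11 : ∀ t, dot3 ((curv γ t)⁻¹ • deriv (deriv (deriv γ)) t
      + (-(deriv (curv γ) t) / curv γ t ^ 2) • deriv (deriv γ) t) (binormal γ t)
      = tors γ t := fun t => by
    have hAB : dot3 (deriv (deriv γ) t) (binormal γ t) = 0 := by
      show dot3 _ (cross3 _ ((curv γ t)⁻¹ • _)) = 0
      rw [cross3_smul_right, dot3_smul_right, dot3_cross_self_right, mul_zero]
    have hJB : dot3 (deriv (deriv (deriv γ)) t) (binormal γ t)
        = (curv γ t)⁻¹ * dot3 (deriv γ t)
            (cross3 (deriv (deriv γ) t) (deriv (deriv (deriv γ)) t)) := by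
      show dot3 _ (cross3 _ ((curv γ t)⁻¹ • _)) = _
      rw [cross3_smul_right, dot3_smul_right,
        triple_cyc (deriv γ t) (deriv (deriv γ) t) (deriv (deriv (deriv γ)) t)]
    rw [dot3_add_left, dot3_smul_left, dot3_smul_left, hAB, hJB]
    show _ = dot3 _ (cross3 _ _) / curv γ t ^ 2
    field_simp
    ring
  -- B' ⬝ N = -τ
  have f12 : ∀ t, dot3 (cross3 (deriv (deriv γ) t) (pnormal γ t)
      + cross3 (deriv γ t) ((curv γ t)⁻¹ • deriv (deriv (deriv γ)) t
        + (-(deriv (curv γ) t) / curv γ t ^ 2) • deriv (deriv γ) t)) (pnormal γ t)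
      = -tors γ t := fun t => by
    set N' := (curv γ t)⁻¹ • deriv (deriv (deriv γ)) t
      + (-(deriv (curv γ) t) / curv γ t ^ 2) • deriv (deriv γ) t with hN'
    rw [dot3_add_left]
    have h1 : dot3 (cross3 (deriv (deriv γ) t) (pnormal γ t)) (pnormal γ t) = 0 := by
      rw [dot3_comm, dot3_cross_self_right]
    have h2 : dot3 (cross3 (deriv γ t) N') (pnormal γ t) = -tors γ t := by
      rw [dot3_comm, triple_cyc (pnormal γ t) (deriv γ t) N',
        cross3_anticomm (pnormal γ t) (deriv γ t)]
      have : cross3 (deriv γ t) (pnormal γ t) = binormal γ t := rfl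
      rw [this]
      have hneg : ∀ u v : E3, dot3 u (-v) = -dot3 u v := fun u v => by
        simp only [dot3, neg_apply3]; ring
      rw [hneg, f11]
    rw [h1, h2, zero_add]
  have hb : ∀ (p q : ℝ) (u v : E3), dot3 (p • u + q • v) (p • u + q • v)
      = p ^ 2 * dot3 u u + 2 * p * q * dot3 u v + q ^ 2 * dot3 v v := by
    intros p q u v; simp only [dot3, add_apply3, smul_apply3]; ring
  have g2 : ∀ t, dot3 (parNormal γ a t) (parNormal γ a t) = 1 := fun t => by
    show dot3 (_ • pnormal γ t + _ • binormal γ t) (_ • pnormal γ t + _ • binormal γ t) = 1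
    rw [hb, f4 t, f7 t, dot3_comm, f9 t]
    simp only [mul_zero, mul_one, add_zero, zero_add]
    rw [← Real.sin_sq_add_cos_sq (∫ s in a..t, tors γ s)]
  have g3 : ∀ t, dot3 (deriv γ t) (parNormal γ a t) = 0 := fun t => by
    show dot3 _ (_ • pnormal γ t + _ • binormal γ t) = 0
    rw [dot3_add_right, dot3_smul_right, dot3_smul_right, f5 t, dot3_comm, f10 t]
    ring
  -- differentiability and continuity of the torsion
  have htorsd : ∀ s, DifferentiableAt ℝ (tors γ) s := fun s => by
    have h1 := (hasDerivAt_dot3 (hTd s) (hasDerivAt_cross3 (hAd s) (hJd s))).differentiableAt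
    have h2 : DifferentiableAt ℝ (fun u => curv γ u ^ 2) s := (hκd s).pow 2
    exact h1.div h2 (pow_ne_zero 2 (hκ0 s))
  have htc : Continuous (tors γ) := continuous_iff_continuousAt.mpr fun s => (htorsd s).continuousAt
  have hθ : ∀ t, HasDerivAt (fun u => ∫ x in a..u, tors γ x) (tors γ t) t := fun t =>
    intervalIntegral.integral_hasDerivAt_right (htc.intervalIntegrable _ _)
      (htc.stronglyMeasurableAtFilter _ _) htc.continuousAt
  have g4 : ∀ t, ∃ μ : ℝ, HasDerivAt (parNormal γ a) (μ • deriv γ t) t := by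
    intro t
    have hNdt := hNd t
    have hBdt := hBd t
    have f6t := f6 t
    have f8t := f8 t
    have f11t := f11 t
    have f12t := f12 t
    set N' := (curv γ t)⁻¹ • deriv (deriv (deriv γ)) t
      + (-(deriv (curv γ) t) / curv γ t ^ 2) • deriv (deriv γ) t with hN'
    set B' := cross3 (deriv (deriv γ) t) (pnormal γ t) + cross3 (deriv γ t) N' with hB'
    have hsin : HasDerivAt (fun u => Real.sin (∫ x in a..u, tors γ x))
        (Real.cos (∫ x in a..t, tors γ x) * tors γ t) t :=
      (Real.hasDerivAt_sin _).comp t (hθ t)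
    have hcos : HasDerivAt (fun u => Real.cos (∫ x in a..u, tors γ x))
        (-Real.sin (∫ x in a..t, tors γ x) * tors γ t) t :=
      (Real.hasDerivAt_cos _).comp t (hθ t)
    have hP0 : HasDerivAt (parNormal γ a)
        ((Real.sin (∫ x in a..t, tors γ x) • N'
          + (Real.cos (∫ x in a..t, tors γ x) * tors γ t) • pnormal γ t)
        + (Real.cos (∫ x in a..t, tors γ x) • B'
          + (-Real.sin (∫ x in a..t, tors γ x) * tors γ t) • binormal γ t)) t :=
      (hsin.smul hNdt).add (hcos.smul hBdt)
    set D := (Real.sin (∫ x in a..t, tors γ x) • N'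
          + (Real.cos (∫ x in a..t, tors γ x) * tors γ t) • pnormal γ t)
        + (Real.cos (∫ x in a..t, tors γ x) • B'
          + (-Real.sin (∫ x in a..t, tors γ x) * tors γ t) • binormal γ t) with hD
    have hDN : dot3 D (pnormal γ t) = 0 := by
      rw [hD]
      simp only [dot3_add_left, dot3_smul_left]
      rw [f6t, f12t, f4 t, f9 t]
      ring
    have hDB : dot3 D (binormal γ t) = 0 := by
      rw [hD]
      simp only [dot3_add_left, dot3_smul_left]
      rw [f11t, f8t, dot3_comm (pnormal γ t) (binormal γ t), f9 t, f7 t]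
      ring
    have hexp := expand3 (deriv γ t) (pnormal γ t) D (f1 t) (f4 t) (f5 t)
    rw [show cross3 (deriv γ t) (pnormal γ t) = binormal γ t from rfl] at hexp
    rw [hDN, hDB] at hexp
    simp only [zero_smul, add_zero] at hexp
    exact ⟨dot3 D (deriv γ t), hexp ▸ hP0⟩
  refine ⟨f1, g2, g3, g4, ?_⟩
  intro t
  obtain ⟨μ, hμ⟩ := g4 t
  have hQ := hasDerivAt_cross3 (hTd t) hμ
  have hNT : dot3 (pnormal γ t) (deriv γ t) = 0 := by rw [dot3_comm]; exact f5 t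
  have hA : deriv (deriv γ) t = curv γ t • pnormal γ t := by
    rw [show pnormal γ t = (curv γ t)⁻¹ • deriv (deriv γ) t from rfl, smul_smul,
      mul_inv_cancel₀ (hκ0 t), one_smul]
  have hval : cross3 (deriv (deriv γ) t) (parNormal γ a t)
      + cross3 (deriv γ t) (μ • deriv γ t)
      = (curv γ t * Real.cos (∫ s in a..t, tors γ s)) • deriv γ t := by
    rw [cross3_smul_right, cross3_self, smul_zero, add_zero, hA,
      show parNormal γ a t = Real.sin (∫ s in a..t, tors γ s) • pnormal γ t
        + Real.cos (∫ s in a..t, tors γ s) • binormal γ t from rfl,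
      cross3_smul_left, cross3_add_right, cross3_smul_right, cross3_smul_right, cross3_self,
      show binormal γ t = cross3 (deriv γ t) (pnormal γ t) from rfl,
      cross3_cross3, f4 t, hNT, one_smul, zero_smul]
    module
  exact ⟨curv γ t * Real.cos (∫ s in a..t, tors γ s), hval ▸ hQ⟩

end ParNormalAux

namespace ParNormalAux

lemma dot3_pair (p q : ℝ) (u v : E3) : dot3 (p • u + q • v) (p • u + q • v)
    = p ^ 2 * dot3 u u + 2 * p * q * dot3 u v + q ^ 2 * dot3 v v := by
  simp only [dot3, add_apply3, smul_apply3]; ring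

end ParNormalAux


open ParNormalAux

/-- Any parallel unit normal field P along a unit-speed curve γ without
inflection points is a constant rotation of P₀. -/
theorem parallel_unit_normal_field_eq_rotation_of_parNormal (γ : ℝ → E3) (a : ℝ)
    (hγ : ContDiff ℝ (⊤ : ℕ∞) γ)
    (hunit : ∀ t, ‖deriv γ t‖ = 1)
    (hinf : ∀ t, deriv (deriv γ) t ≠ 0)
    (P : ℝ → E3) (hP : ContDiff ℝ 1 P)
    (hPunit : ∀ t, ‖P t‖ = 1)
    (hPorth : ∀ t, dot3 (P t) (deriv γ t) = 0)
    (hPpar : ∀ t, cross3 (deriv P t) (deriv γ t) = 0) :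
    ∃ δ : ℝ, ∀ t, P t = Real.cos δ • parNormal γ a t +
      Real.sin δ • cross3 (deriv γ t) (parNormal γ a t) := by
  obtain ⟨f1, f4P, f5P, hP0par, hQpar⟩ := ParNormalAux.frame γ a hγ hunit hinf
  have hPd : ∀ t, HasDerivAt P (deriv P t) t := fun t =>
    ((hP.differentiable one_ne_zero) t).hasDerivAt
  have hP'eq : ∀ t, deriv P t = dot3 (deriv P t) (deriv γ t) • deriv γ t := fun t =>
    eq_smul_of_cross3_eq_zero (hPpar t) (f1 t)
  have hF : ∀ t, HasDerivAt (fun s => dot3 (P s) (parNormal γ a s)) 0 t := fun t => by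
    obtain ⟨μ, hμ⟩ := hP0par t
    have h := hasDerivAt_dot3 (hPd t) hμ
    have hz : dot3 (deriv P t) (parNormal γ a t) + dot3 (P t) (μ • deriv γ t) = 0 := by
      rw [hP'eq t, dot3_smul_left, dot3_smul_right, hPorth t, f5P t]; ring
    exact hz ▸ h
  have hG : ∀ t, HasDerivAt (fun s => dot3 (P s) (cross3 (deriv γ s) (parNormal γ a s))) 0 t :=
    fun t => by
    obtain ⟨ν, hν⟩ := hQpar t
    have h := hasDerivAt_dot3 (hPd t) hν
    have hz : dot3 (deriv P t) (cross3 (deriv γ t) (parNormal γ a t))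
        + dot3 (P t) (ν • deriv γ t) = 0 := by
      rw [hP'eq t, dot3_smul_left, dot3_smul_right, hPorth t, dot3_cross_self_left]; ring
    exact hz ▸ h
  have hFc : ∀ t, dot3 (P t) (parNormal γ a t) = dot3 (P a) (parNormal γ a a) := fun t =>
    is_const_of_deriv_eq_zero (fun s => (hF s).differentiableAt) (fun s => (hF s).deriv) t a
  have hGc : ∀ t, dot3 (P t) (cross3 (deriv γ t) (parNormal γ a t))
      = dot3 (P a) (cross3 (deriv γ a) (parNormal γ a a)) := fun t =>
    is_const_of_deriv_eq_zero (fun s => (hG s).differentiableAt) (fun s => (hG s).deriv) t a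
  have hexp : ∀ t, P t = dot3 (P t) (parNormal γ a t) • parNormal γ a t
      + dot3 (P t) (cross3 (deriv γ t) (parNormal γ a t))
        • cross3 (deriv γ t) (parNormal γ a t) := fun t => by
    have h := expand3 (deriv γ t) (parNormal γ a t) (P t) (f1 t) (f4P t) (f5P t)
    rwa [hPorth t, zero_smul, zero_add] at h
  set c := dot3 (P a) (parNormal γ a a) with hc
  set s := dot3 (P a) (cross3 (deriv γ a) (parNormal γ a a)) with hs
  have hQQ : dot3 (cross3 (deriv γ a) (parNormal γ a a))
      (cross3 (deriv γ a) (parNormal γ a a)) = 1 := by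
    rw [lagrange, f1 a, f4P a, f5P a]; ring
  have hPQ : dot3 (parNormal γ a a) (cross3 (deriv γ a) (parNormal γ a a)) = 0 :=
    dot3_cross_self_right _ _
  have hsum : c ^ 2 + s ^ 2 = 1 := by
    have h1 : dot3 (P a) (P a) = 1 := by rw [dot3_self, hPunit a]; norm_num
    rw [hexp a] at h1
    rw [← hc, ← hs] at h1
    rw [dot3_pair, f4P a, hPQ, hQQ] at h1
    linarith [h1]
  have hcbd : -1 ≤ c ∧ c ≤ 1 := ⟨by nlinarith, by nlinarith⟩
  refine ⟨if 0 ≤ s then Real.arccos c else -Real.arccos c, fun t => ?_⟩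
  have hcos : Real.cos (if 0 ≤ s then Real.arccos c else -Real.arccos c) = c := by
    split_ifs <;> simp [Real.cos_arccos hcbd.1 hcbd.2]
  have hsin : Real.sin (if 0 ≤ s then Real.arccos c else -Real.arccos c) = s := by
    split_ifs with hsgn
    · rw [Real.sin_arccos, show 1 - c ^ 2 = s ^ 2 by linarith, Real.sqrt_sq_eq_abs,
        abs_of_nonneg hsgn]
    · rw [Real.sin_neg, Real.sin_arccos, show 1 - c ^ 2 = s ^ 2 by linarith,
        Real.sqrt_sq_eq_abs, abs_of_neg (lt_of_not_ge hsgn), neg_neg]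
  rw [hcos, hsin, hexp t, hFc t, hGc t]
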